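/- arXiv:2207.06552 — 2 statements merged into one kernel-verified Lean document; each statement's English description precedes it below -/
import Mathlib

section
/- Let m be a positive integer with at least 4 positive divisors d₁ < d₂ < ... < d_{d(m)}, and let A be the d(m)×d(m) matrix with entries A_{ij} = ∑_{n=1}^{m/d_j} (d_j·n)^{i-1}. Then A is singular; in particular, the row vector (0, m², −3m, 2, 0, ..., 0) lies in the left kernel of A. -/
/-!
For a divisor `d` of `m` write `m = d * N`. Row `k` of column `d` is the power sum
`∑_{n ≤ N} (d n)^k`, so the combination `m² · row₁ - 3m · row₂ + 2 · row₃` of that column is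
`d³ ∑_{n ≤ N} n (N - n) (N - 2n)`, which vanishes because the summand changes sign under the
reflection `n ↦ N - n`. Hence the nonzero vector `c` lies in the left kernel of `A`.
-/

open Finset

theorem sum_range_mul_sub_mul_sub_two_mul (N : ℕ) :
    ∑ n ∈ range (N + 1), (n : ℤ) * (N - n) * (N - 2 * n) = 0 := by
  have hneg : ∑ n ∈ range (N + 1), ((N - n : ℕ) : ℤ) * (N - (N - n : ℕ)) * (N - 2 * (N - n : ℕ))
      = -∑ n ∈ range (N + 1), (n : ℤ) * (N - n) * (N - 2 * n) := by
    rw [← sum_neg_distrib]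
    refine sum_congr rfl fun n hn => ?_
    rw [Nat.cast_sub (Nat.lt_succ_iff.mp (mem_range.mp hn))]
    ring
  have hreflect := sum_range_reflect (fun n : ℕ => (n : ℤ) * (N - n) * (N - 2 * n)) (N + 1)
  simp only [Nat.add_sub_cancel] at hreflect
  linarith

theorem sum_Icc_mul_sub_mul_sub_two_mul {R : Type*} [CommRing R] (N : ℕ) :
    ∑ n ∈ Icc 1 N, (n : R) * (N - n) * (N - 2 * n) = 0 := by
  have h := congrArg (Int.cast : ℤ → R) (sum_range_mul_sub_mul_sub_two_mul N)
  rw [range_eq_Ico, sum_eq_sum_Ico_succ_bot (by omega : 0 < N + 1), Ico_add_one_right_eq_Icc] at h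
  push_cast at h
  simpa using h

theorem sum_Icc_power_combination_eq_zero {R : Type*} [CommRing R] (x : R) (N : ℕ) :
    (x * N) ^ 2 * ∑ n ∈ Icc 1 N, x * n - 3 * (x * N) * ∑ n ∈ Icc 1 N, (x * n) ^ 2
      + 2 * ∑ n ∈ Icc 1 N, (x * n) ^ 3 = 0 := by
  calc _ = x ^ 3 * ∑ n ∈ Icc 1 N, (n : R) * (N - n) * (N - 2 * n) := by
        simp only [mul_sum, ← sum_sub_distrib, ← sum_add_distrib]
        refine sum_congr rfl fun n _ => ?_
        ring
    _ = 0 := by rw [sum_Icc_mul_sub_mul_sub_two_mul, mul_zero]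

theorem matrix_A_singular_general (m : ℕ) (h4 : 4 ≤ m.divisors.card)
    (e : Fin m.divisors.card ≃o m.divisors)
    (A : Matrix (Fin m.divisors.card) (Fin m.divisors.card) ℚ)
    (hA : ∀ i j, A i j = ∑ n ∈ Finset.Icc 1 (m / ((e j : ℕ))),
      (((e j : ℕ) : ℚ) * n) ^ (i : ℕ))
    (c : Fin m.divisors.card → ℚ)
    (hc : ∀ i, c i = if (i : ℕ) = 1 then (m : ℚ) ^ 2
      else if (i : ℕ) = 2 then -3 * m else if (i : ℕ) = 3 then 2 else 0) :
    Matrix.vecMul c A = 0 ∧ A.det = 0 := by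
  have hc_single : c = (m : ℚ) ^ 2 • Pi.single ⟨1, by omega⟩ 1
      + (-3 * m : ℚ) • Pi.single ⟨2, by omega⟩ 1 + (2 : ℚ) • Pi.single ⟨3, by omega⟩ 1 := by
    funext i
    rw [hc]
    simp only [Pi.add_apply, Pi.smul_apply, Pi.single_apply, Fin.ext_iff, smul_eq_mul]
    split_ifs <;> grind
  have hvec : Matrix.vecMul c A = 0 := by
    funext j
    have hm_factor : (m : ℚ) = (e j : ℕ) * (m / (e j : ℕ) : ℕ) := by
      exact_mod_cast (Nat.mul_div_cancel' (Nat.dvd_of_mem_divisors (e j).2)).symm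
    simp only [hc_single, Matrix.add_vecMul, Matrix.smul_vecMul, Matrix.single_one_vecMul,
      Pi.add_apply, Pi.smul_apply, Matrix.row_apply, hA, pow_one, smul_eq_mul, Pi.zero_apply]
    rw [hm_factor]
    convert sum_Icc_power_combination_eq_zero (((e j : ℕ)) : ℚ) (m / (e j : ℕ)) using 2
    ring
  refine ⟨hvec, Matrix.exists_vecMul_eq_zero_iff.mp ⟨c, fun h => ?_, hvec⟩⟩
  have := congrFun h ⟨3, by omega⟩
  simp [hc] at this

theorem matrix_A_singular (m : ℕ) (hm : 0 < m) (h4 : 4 ≤ m.divisors.card)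
    (e : Fin m.divisors.card ≃o m.divisors)
    (A : Matrix (Fin m.divisors.card) (Fin m.divisors.card) ℚ)
    (hA : ∀ i j, A i j = ∑ n ∈ Finset.Icc 1 (m / ((e j : ℕ))),
      (((e j : ℕ) : ℚ) * n) ^ (i : ℕ))
    (c : Fin m.divisors.card → ℚ)
    (hc : ∀ i, c i = if (i : ℕ) = 1 then (m : ℚ) ^ 2
      else if (i : ℕ) = 2 then -3 * m else if (i : ℕ) = 3 then 2 else 0) :
    Matrix.vecMul c A = 0 ∧ A.det = 0 :=
  matrix_A_singular_general m h4 e A hA c hc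
end

section
/- Let m be a positive integer with D = d(m) ≥ 4 divisors and suppose b₁, ..., b_m are complex numbers satisfying ∑_{k=1}^m b_k k^r = 0 for r = 0, 1, ..., D−1. Then the series Z_m(s) = ∑_{n=0}^∞ ∑_{k=1}^m b_k (mn+k)^{−s} (with each inner sum over k taken as a block) converges for all s with Re(s) > 2 − D, and defines an analytic function on that half-plane. -/
/-!
Expand `t ↦ (mn + t)^{-s}` about `t = 1` to order `D`. The vanishing moments
`∑ b_k (k - 1)^i = 0` (`i ≤ D`) annihilate the Taylor polynomial in the `n`-th block, so only the
remainder survives, and it is `O((n + 1)^{-Re s - D - 1})` locally uniformly in `s`. The blocks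
therefore converge absolutely and locally uniformly on `Re s > -D`, with `D + 1 = d(m)`, and the
sum is holomorphic there.
-/

open Finset

section Moments

variable {ι : Type*}

theorem Finset.sum_mul_sub_pow_eq_zero {R : Type*} [CommRing R] (t : Finset ι) (w x : ι → R)
    (c : R) {i : ℕ} (h : ∀ j ≤ i, ∑ k ∈ t, w k * x k ^ j = 0) :
    ∑ k ∈ t, w k * (x k - c) ^ i = 0 := by
  calc ∑ k ∈ t, w k * (x k - c) ^ i
      = ∑ j ∈ range (i + 1), (-c) ^ (i - j) * i.choose j * ∑ k ∈ t, w k * x k ^ j := by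
        simp_rw [sub_eq_add_neg, add_pow, mul_sum]
        rw [sum_comm]
        refine sum_congr rfl fun j _ => sum_congr rfl fun k _ => by ring
    _ = 0 := sum_eq_zero fun j hj => by
        rw [h j (Nat.lt_succ_iff.mp (mem_range.mp hj)), mul_zero]

variable {E : Type*} [NormedAddCommGroup E] [NormedSpace ℂ E]

theorem Finset.sum_smul_taylorWithinEval_eq_zero (t : Finset ι) (w : ι → ℂ) (x : ι → ℝ)
    (f : ℝ → E) (n : ℕ) (s : Set ℝ) (a : ℝ)
    (hw : ∀ i ≤ n, ∑ k ∈ t, w k * ((x k : ℂ) - a) ^ i = 0) :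
    ∑ k ∈ t, w k • taylorWithinEval f n s a (x k) = 0 := by
  simp_rw [taylor_within_apply, smul_sum]
  rw [sum_comm]
  refine sum_eq_zero fun i hi => ?_
  calc ∑ k ∈ t, w k • (((i.factorial : ℝ))⁻¹ * (x k - a) ^ i) • iteratedDerivWithin i f s a
      = ((i.factorial : ℂ)⁻¹ * ∑ k ∈ t, w k * ((x k : ℂ) - a) ^ i) •
          iteratedDerivWithin i f s a := by
        rw [mul_sum, sum_smul]
        refine sum_congr rfl fun k _ => ?_
        rw [← Complex.coe_smul, smul_smul]
        push_cast
        ring_nf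
    _ = 0 := by rw [hw i (Nat.lt_succ_iff.mp (mem_range.mp hi)), mul_zero, zero_smul]

theorem Finset.norm_sum_smul_le_of_moments_eq_zero {f : ℝ → E} {a b C : ℝ} {n : ℕ} (hab : a ≤ b)
    (hf : ContDiffOn ℝ (n + 1) f (Set.Icc a b))
    (hC : ∀ y ∈ Set.Icc a b, ‖iteratedDerivWithin (n + 1) f (Set.Icc a b) y‖ ≤ C)
    (t : Finset ι) (w : ι → ℂ) (x : ι → ℝ) (hx : ∀ k ∈ t, x k ∈ Set.Icc a b)
    (hw : ∀ i ≤ n, ∑ k ∈ t, w k * ((x k : ℂ) - a) ^ i = 0) :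
    ‖∑ k ∈ t, w k • f (x k)‖ ≤ (∑ k ∈ t, ‖w k‖) * (C * (b - a) ^ (n + 1) / n.factorial) := by
  have hC₀ : 0 ≤ C := (norm_nonneg _).trans (hC a ⟨le_rfl, hab⟩)
  have hremainder : ∀ k ∈ t,
      ‖f (x k) - taylorWithinEval f n (Set.Icc a b) a (x k)‖ ≤
        C * (b - a) ^ (n + 1) / n.factorial :=
    fun k hk => (taylor_mean_remainder_bound hab hf (hx k hk) hC).trans <| by
      gcongr
      · exact sub_nonneg.mpr (hx k hk).1
      · exact (hx k hk).2
  calc ‖∑ k ∈ t, w k • f (x k)‖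
      = ‖∑ k ∈ t, w k • (f (x k) - taylorWithinEval f n (Set.Icc a b) a (x k))‖ := by
        simp_rw [smul_sub]
        rw [sum_sub_distrib, sum_smul_taylorWithinEval_eq_zero t w x f n _ a hw, sub_zero]
    _ ≤ ∑ k ∈ t, ‖w k‖ * (C * (b - a) ^ (n + 1) / n.factorial) := by
        refine (norm_sum_le _ _).trans (sum_le_sum fun k hk => ?_)
        rw [norm_smul]
        exact mul_le_mul_of_nonneg_left (hremainder k hk) (norm_nonneg _)
    _ = _ := (sum_mul ..).symm

end Moments

section ShiftedCpow

open Complex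

variable {c : ℝ}

theorem hasDerivAt_ofReal_add_cpow {t : ℝ} (ht : 0 < c + t) (w : ℂ) :
    HasDerivAt (fun y : ℝ => ((c : ℂ) + y) ^ w) (w * ((c : ℂ) + t) ^ (w - 1)) t := by
  have hslit : (c : ℂ) + t ∈ slitPlane := by exact_mod_cast ofReal_mem_slitPlane.mpr ht
  simpa using (((hasDerivAt_id (t : ℂ)).const_add (c : ℂ)).cpow_const hslit).comp_ofReal

theorem contDiffOn_ofReal_add_cpow (w : ℂ) {n : WithTop ℕ∞} :
    ContDiffOn ℝ n (fun y : ℝ => ((c : ℂ) + y) ^ w) {y | 0 < c + y} := by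
  intro t ht
  have hslit : (c : ℂ) + t ∈ slitPlane := by exact_mod_cast ofReal_mem_slitPlane.mpr ht
  have hanalytic : AnalyticAt ℂ (fun z : ℂ => ((c : ℂ) + z) ^ w) t :=
    (analyticAt_const.add analyticAt_id).cpow analyticAt_const hslit
  exact (hanalytic.contDiffAt.restrict_scalars ℝ).comp t
    ofRealCLM.contDiff.contDiffAt |>.contDiffWithinAt

theorem iteratedDerivWithin_ofReal_add_cpow {s : Set ℝ} (hs : UniqueDiffOn ℝ s)
    (hc : ∀ y ∈ s, 0 < c + y) (w : ℂ) (j : ℕ) {t : ℝ} (ht : t ∈ s) :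
    iteratedDerivWithin j (fun y : ℝ => ((c : ℂ) + y) ^ w) s t =
      (∏ i ∈ range j, (w - i)) * ((c : ℂ) + t) ^ (w - j) := by
  induction j generalizing t with
  | zero => simp
  | succ j ih =>
    rw [iteratedDerivWithin_succ, derivWithin_congr (fun y hy => ih hy) (ih ht),
      (((hasDerivAt_ofReal_add_cpow (hc t ht) (w - j)).const_mul _).hasDerivWithinAt).derivWithin
        (hs t ht), prod_range_succ]
    push_cast
    ring_nf

theorem norm_iteratedDerivWithin_ofReal_add_cpow_le {s : Set ℝ} (hs : UniqueDiffOn ℝ s)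
    (hc : ∀ y ∈ s, 0 < c + y) (w : ℂ) (j : ℕ) {t : ℝ} (ht : t ∈ s) :
    ‖iteratedDerivWithin j (fun y : ℝ => ((c : ℂ) + y) ^ w) s t‖ ≤
      (∏ i ∈ range j, (‖w‖ + i)) * (c + t) ^ (w.re - j) := by
  rw [iteratedDerivWithin_ofReal_add_cpow hs hc w j ht, norm_mul, norm_prod]
  have hnorm : ‖((c : ℂ) + t) ^ (w - j)‖ = (c + t) ^ (w.re - j) := by
    rw [← ofReal_add, norm_cpow_eq_rpow_re_of_pos (hc t ht)]
    simp
  rw [hnorm]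
  refine mul_le_mul_of_nonneg_right (prod_le_prod (fun i _ => norm_nonneg _) fun i _ => ?_)
    (Real.rpow_nonneg (hc t ht).le _)
  exact (norm_sub_le _ _).trans_eq (by rw [Complex.norm_natCast])

theorem norm_iteratedDerivWithin_ofReal_add_cpow_neg_le {s : Set ℝ} (hs : UniqueDiffOn ℝ s)
    {X : ℝ} (hX : 1 ≤ X) (hc : ∀ y ∈ s, X ≤ c + y) {z : ℂ} {σ R : ℝ} (hσ : σ ≤ z.re)
    (hR : ‖z‖ ≤ R) (j : ℕ) (hj : 0 ≤ σ + j) {t : ℝ} (ht : t ∈ s) :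
    ‖iteratedDerivWithin j (fun y : ℝ => ((c : ℂ) + y) ^ (-z)) s t‖ ≤
      (∏ i ∈ range j, (R + i)) * X ^ (-(σ + j)) := by
  have hpos : ∀ y ∈ s, 0 < c + y := fun y hy => by linarith [hc y hy]
  refine (norm_iteratedDerivWithin_ofReal_add_cpow_le hs hpos (-z) j ht).trans ?_
  have hprod : ∏ i ∈ range j, (‖-z‖ + i) ≤ ∏ i ∈ range j, (R + i) :=
    prod_le_prod (fun i _ => by positivity) fun i _ => by rw [norm_neg]; linarith
  have hpow : (c + t) ^ ((-z).re - j) ≤ X ^ (-(σ + j)) :=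
    calc (c + t) ^ ((-z).re - j)
        ≤ X ^ ((-z).re - j) :=
          Real.rpow_le_rpow_of_nonpos (by linarith) (hc t ht) (by rw [neg_re]; linarith)
      _ ≤ X ^ (-(σ + j)) := Real.rpow_le_rpow_of_exponent_le hX (by rw [neg_re]; linarith)
  exact mul_le_mul hprod hpow (Real.rpow_nonneg (hpos t ht).le _)
    (prod_nonneg fun i _ => by linarith [norm_nonneg z])

end ShiftedCpow

theorem summable_nat_add_one_rpow {p : ℝ} (hp : p < -1) :
    Summable (fun n : ℕ => ((n : ℝ) + 1) ^ p) := by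
  simpa using (summable_nat_add_iff 1).mpr (Real.summable_nat_rpow.mpr hp)

section ZetaBlock

open Complex

noncomputable def zetaBlock (m : ℕ) (b : ℕ → ℂ) (n : ℕ) (s : ℂ) : ℂ :=
  ∑ k ∈ Icc 1 m, b k * ((m : ℂ) * n + k) ^ (-s)

theorem differentiable_zetaBlock (m : ℕ) (b : ℕ → ℂ) (n : ℕ) :
    Differentiable ℂ (zetaBlock m b n) := by
  refine Differentiable.fun_sum fun k hk => (differentiable_const _).mul ?_
  have hpos : 0 < m * n + k := by have := (mem_Icc.mp hk).1; omega
  exact differentiable_id.neg.const_cpow (Or.inl (by exact_mod_cast hpos.ne'))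

variable {m D : ℕ} {b : ℕ → ℂ}

theorem norm_zetaBlock_le (hm : 0 < m) (hb : ∀ r ≤ D, ∑ k ∈ Icc 1 m, b k * (k : ℂ) ^ r = 0)
    {σ : ℝ} (hσ : 0 ≤ σ + (D + 1)) (R : ℝ) :
    ∃ A : ℝ, ∀ s : ℂ, σ ≤ s.re → ‖s‖ ≤ R → ∀ n : ℕ,
      ‖zetaBlock m b n s‖ ≤ A * ((n : ℝ) + 1) ^ (-(σ + (D + 1))) := by
  refine ⟨(∑ k ∈ Icc 1 m, ‖b k‖) * ((∏ i ∈ range (D + 1), (R + i)) * m ^ (D + 1) / D.factorial),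
    fun s hσs hsR n => ?_⟩
  -- `[1, m + 1]` rather than `[1, m]`, so that the interval is nondegenerate also for `m = 1`.
  set I := Set.Icc (1 : ℝ) (m + 1)
  set c : ℝ := m * n
  have hm1 : (1 : ℝ) ≤ m := by exact_mod_cast hm
  have hc : ∀ y ∈ I, (n : ℝ) + 1 ≤ c + y := fun y hy => by
    have := hy.1
    nlinarith [(n.cast_nonneg : (0 : ℝ) ≤ n)]
  have hpos : ∀ y ∈ I, 0 < c + y := fun y hy => by
    linarith [hc y hy, (n.cast_nonneg : (0 : ℝ) ≤ n)]
  have hderiv : ∀ y ∈ I, ‖iteratedDerivWithin (D + 1) (fun y : ℝ => ((c : ℂ) + y) ^ (-s)) I y‖ ≤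
      (∏ i ∈ range (D + 1), (R + i)) * ((n : ℝ) + 1) ^ (-(σ + (D + 1))) := fun y hy => by
    simpa using norm_iteratedDerivWithin_ofReal_add_cpow_neg_le (uniqueDiffOn_Icc (by linarith))
      (by linarith [(n.cast_nonneg : (0 : ℝ) ≤ n)]) hc hσs hsR (D + 1) (by push_cast; exact hσ) hy
  have hmoments : ∀ i ≤ D, ∑ k ∈ Icc 1 m, b k * (((k : ℝ) : ℂ) - (1 : ℝ)) ^ i = 0 := fun i hi => by
    push_cast
    exact sum_mul_sub_pow_eq_zero _ b _ 1 fun j hj => hb j (hj.trans hi)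
  have hk : ∀ k ∈ Icc 1 m, (k : ℝ) ∈ I := fun k hk => by
    obtain ⟨hk1, hkm⟩ := mem_Icc.mp hk
    exact ⟨by exact_mod_cast hk1, by linarith [(Nat.cast_le (α := ℝ)).mpr hkm]⟩
  have key := norm_sum_smul_le_of_moments_eq_zero (by linarith)
    ((contDiffOn_ofReal_add_cpow (-s)).mono hpos) hderiv (Icc 1 m) b (fun k => (k : ℝ)) hk hmoments
  convert key using 1
  · simp [zetaBlock, c]
  · ring

theorem summable_zetaBlock (hm : 0 < m) (hb : ∀ r ≤ D, ∑ k ∈ Icc 1 m, b k * (k : ℂ) ^ r = 0)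
    {s : ℂ} (hs : -(D : ℝ) < s.re) : Summable (fun n => zetaBlock m b n s) := by
  obtain ⟨A, hA⟩ := norm_zetaBlock_le hm hb (σ := s.re) (by linarith) ‖s‖
  exact .of_norm_bounded ((summable_nat_add_one_rpow (by linarith)).mul_left A)
    fun n => hA s le_rfl le_rfl n

theorem analyticOn_tsum_zetaBlock (hm : 0 < m)
    (hb : ∀ r ≤ D, ∑ k ∈ Icc 1 m, b k * (k : ℂ) ^ r = 0) :
    AnalyticOn ℂ (fun s => ∑' n, zetaBlock m b n s) {s | -(D : ℝ) < s.re} := by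
  intro z (hz : -(D : ℝ) < z.re)
  obtain ⟨σ, hσD, hσz⟩ := exists_between hz
  obtain ⟨A, hA⟩ := norm_zetaBlock_le hm hb (σ := σ) (by linarith) (‖z‖ + 1)
  set V := {s : ℂ | σ < s.re} ∩ Metric.ball 0 (‖z‖ + 1)
  have hV : IsOpen V := (isOpen_lt continuous_const continuous_re).inter Metric.isOpen_ball
  have hzV : z ∈ V := ⟨hσz, by simp⟩
  have hdiff : DifferentiableOn ℂ (fun s => ∑' n, zetaBlock m b n s) V :=
    differentiableOn_tsum_of_summable_norm ((summable_nat_add_one_rpow (by linarith)).mul_left A)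
      (fun n => (differentiable_zetaBlock m b n).differentiableOn) hV
      fun n s hs => hA s hs.1.le (mem_ball_zero_iff.mp hs.2).le n
  exact (hdiff.analyticAt (hV.mem_nhds hzV)).analyticWithinAt

end ZetaBlock

open Filter in
theorem Zm_converges_and_analytic_general (m : ℕ) (hm : 0 < m)
    (b : ℕ → ℂ)
    (hb : ∀ r : ℕ, r ≤ m.divisors.card - 1 →
      ∑ k ∈ Finset.Icc 1 m, b k * (k : ℂ) ^ r = 0) :
    ∃ Z : ℂ → ℂ,
      (∀ s : ℂ, 2 - (m.divisors.card : ℝ) < s.re →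
        Tendsto (fun N : ℕ => ∑ n ∈ Finset.range (N + 1),
          ∑ k ∈ Finset.Icc 1 m, b k * ((m : ℂ) * n + k) ^ (-s)) atTop (nhds (Z s))) ∧
      AnalyticOn ℂ Z {s : ℂ | 2 - (m.divisors.card : ℝ) < s.re} := by
  obtain ⟨D, hD⟩ : ∃ D, m.divisors.card = D + 1 :=
    Nat.exists_eq_add_one.mpr (card_pos.mpr (Nat.nonempty_divisors.mpr hm.ne'))
  rw [hD, Nat.add_sub_cancel] at hb
  have hU : {s : ℂ | 2 - (m.divisors.card : ℝ) < s.re} ⊆ {s | -(D : ℝ) < s.re} :=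
    fun s (hs : 2 - _ < s.re) => show -(D : ℝ) < s.re by rw [hD] at hs; push_cast at hs; linarith
  refine ⟨fun s => ∑' n, zetaBlock m b n s, fun s hs => ?_,
    (analyticOn_tsum_zetaBlock hm hb).mono hU⟩
  exact (summable_zetaBlock hm hb (hU hs)).hasSum.tendsto_sum_nat.comp (tendsto_add_atTop_nat 1)

open Filter in
theorem Zm_converges_and_analytic (m : ℕ) (hm : 0 < m) (h4 : 4 ≤ m.divisors.card)
    (b : ℕ → ℂ)
    (hb : ∀ r : ℕ, r ≤ m.divisors.card - 1 →
      ∑ k ∈ Finset.Icc 1 m, b k * (k : ℂ) ^ r = 0) :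
    ∃ Z : ℂ → ℂ,
      (∀ s : ℂ, 2 - (m.divisors.card : ℝ) < s.re →
        Tendsto (fun N : ℕ => ∑ n ∈ Finset.range (N + 1),
          ∑ k ∈ Finset.Icc 1 m, b k * ((m : ℂ) * n + k) ^ (-s)) atTop (nhds (Z s))) ∧
      AnalyticOn ℂ Z {s : ℂ | 2 - (m.divisors.card : ℝ) < s.re} :=
  Zm_converges_and_analytic_general m hm b hb
end
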